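/- The targeted functional characterizes additivity: E[ (E[ δψ(Z)/G(Z) − m_add(X) | X ])^2 ] = E[ (m_ψ(X) − m_add(X))^2 ], which equals 0 if and only if m_ψ(X) = m_add(X) almost surely. -/

import Mathlib

open MeasureTheory ProbabilityTheory Filter Set
open scoped Topology

/-! Since the censoring time `C` is independent of `(X, Y)` and its survival function `G` is
continuous, `E[1{Y ≤ C} | X, Y] = P(C ≥ Y) = G(Y)`. Hence the inverse-probability-weighted
observation `δ ψ(Z) / G(Z) = 1{Y ≤ C} ψ(Y) / G(Y)` has the same integral as `ψ(Y)` over every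
event `{X ∈ A}`, i.e. `E[δ ψ(Z) / G(Z) | X] = m_ψ(X)`; it is integrable because `ψ` vanishes
beyond `τ₀`, where `G ≥ G(τ₀) > 0`. Subtracting the `X`-measurable `m_add(X)` gives the identity.
-/

lemma measureReal_Ici_eq_measureReal_Ioi {ν : Measure ℝ} [IsFiniteMeasure ν] {y : ℝ}
    (h : ContinuousWithinAt (fun t => ν.real (Ioi t)) (Iio y) y) :
    ν.real (Ici y) = ν.real (Ioi y) := by
  set u : ℕ → ℝ := fun n => y - 1 / ((n : ℝ) + 1)
  have hu_mono : Monotone u := fun m n hmn => by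
    simp only [u]
    gcongr
  have hu_lim : Tendsto u atTop (𝓝[<] y) := by
    refine tendsto_nhdsWithin_of_tendsto_nhds_of_eventually_within _ ?_
      (Eventually.of_forall fun n => ?_)
    · simpa [u] using (tendsto_const_nhds (x := y)).sub tendsto_one_div_add_atTop_nhds_zero_nat
    · simp only [u, mem_Iio, sub_lt_self_iff]
      positivity
  have hinter : ⋂ n, Ioi (u n) = Ici y := by
    ext c
    simp only [mem_iInter, mem_Ioi, mem_Ici, u]
    refine ⟨fun hc => ?_, fun hc n => by linarith [show (0 : ℝ) < 1 / ((n : ℝ) + 1) by positivity]⟩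
    by_contra! hcy
    obtain ⟨n, hn⟩ := exists_nat_one_div_lt (sub_pos.mpr hcy)
    linarith [hc n]
  have hlim := tendsto_measure_iInter_atTop (μ := ν) (fun n => measurableSet_Ioi.nullMeasurableSet)
    (fun m n hmn => Ioi_subset_Ioi (hu_mono hmn)) ⟨0, measure_ne_top _ _⟩
  rw [hinter] at hlim
  exact tendsto_nhds_unique ((ENNReal.tendsto_toReal (measure_ne_top _ _)).comp hlim)
    (h.tendsto.comp hu_lim)

theorem ProbabilityTheory.IndepFun.integral_comp_eq_integral_integral {Ω α β E : Type*}
    {mΩ : MeasurableSpace Ω} [MeasurableSpace α] [MeasurableSpace β] [NormedAddCommGroup E]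
    [NormedSpace ℝ E]
    {μ : Measure Ω} [IsFiniteMeasure μ] {U : Ω → α} {V : Ω → β} (hUV : IndepFun U V μ)
    (hU : Measurable U) (hV : Measurable V) {F : α → β → E}
    (hF : Integrable (Function.uncurry F) ((μ.map U).prod (μ.map V))) :
    ∫ ω, F (U ω) (V ω) ∂μ = ∫ ω, ∫ v, F (U ω) v ∂(μ.map V) ∂μ := by
  have hmap := hUV.map_prod_eq_prod_map_map hU.aemeasurable hV.aemeasurable
  calc ∫ ω, F (U ω) (V ω) ∂μ
      = ∫ p, Function.uncurry F p ∂(μ.map fun ω => (U ω, V ω)) :=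
        (integral_map (hU.prodMk hV).aemeasurable (hmap ▸ hF.1)).symm
    _ = ∫ u, ∫ v, F u v ∂(μ.map V) ∂(μ.map U) := by rw [hmap, integral_prod _ hF]; rfl
    _ = ∫ ω, ∫ v, F (U ω) v ∂(μ.map V) ∂μ := integral_map hU.aemeasurable hF.1.integral_prod_right'

lemma condExp_ae_eq_condExp_of_forall_setIntegral_eq {α E : Type*} {m m₀ : MeasurableSpace α}
    [NormedAddCommGroup E] [NormedSpace ℝ E] [CompleteSpace E]
    {μ : Measure α} (hm : m ≤ m₀) [SigmaFinite (μ.trim hm)] {f g : α → E}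
    (hf : Integrable f μ) (hg : Integrable g μ)
    (hfg : ∀ s, MeasurableSet[m] s → ∫ x in s, f x ∂μ = ∫ x in s, g x ∂μ) :
    μ[f | m] =ᵐ[μ] μ[g | m] :=
  (ae_eq_condExp_of_forall_setIntegral_eq hm hf (fun _ _ _ => integrable_condExp.integrableOn)
    (fun s hs _ => by rw [setIntegral_condExp hm hg hs, hfg s hs])
    stronglyMeasurable_condExp.aestronglyMeasurable).symm

lemma integral_sq_sub_eq_zero_iff {α : Type*} {m : MeasurableSpace α} {μ : Measure α}
    {f g : α → ℝ} (hf : MemLp f 2 μ) (hg : MemLp g 2 μ) :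
    ∫ x, (f x - g x) ^ 2 ∂μ = 0 ↔ f =ᵐ[μ] g := by
  rw [integral_eq_zero_iff_of_nonneg (fun x => sq_nonneg (f x - g x)) (hf.sub hg).integrable_sq]
  refine eventually_congr (Eventually.of_forall fun x => ?_)
  simp [sub_eq_zero]

lemma abs_ite_mul_div_le {G : ℝ → ℝ} (hG : Antitone G) {τ₀ a s c M : ℝ} (hGτ₀ : 0 < G τ₀)
    (ha : |a| ≤ M) (has : τ₀ < s → a = 0) :
    |(if s ≤ c then (1 : ℝ) else 0) * (a / G s)| ≤ M / G τ₀ := by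
  have hM : 0 ≤ M := (abs_nonneg a).trans ha
  have hdiv : |a / G s| ≤ M / G τ₀ := by
    by_cases hs : τ₀ < s
    · simpa [has hs] using div_nonneg hM hGτ₀.le
    · have hGs : G τ₀ ≤ G s := hG (not_lt.mp hs)
      rw [abs_div, abs_of_pos (hGτ₀.trans_le hGs)]
      exact div_le_div₀ hM ha hGτ₀ hGs
  split_ifs
  · simpa using hdiv
  · simpa using (abs_nonneg _).trans hdiv

section Survival

variable {Ω : Type*} {mΩ : MeasurableSpace Ω} {μ : Measure Ω} [IsFiniteMeasure μ]
  {C : Ω → ℝ} {G : ℝ → ℝ}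

lemma antitone_of_eq_measureReal_lt (hG : ∀ t, G t = μ.real {ω | t < C ω}) : Antitone G :=
  fun s t hst => by
    rw [hG, hG]
    exact measureReal_mono fun ω (hω : t < C ω) => hst.trans_lt hω

lemma integral_ite_le_map_eq (hC : Measurable C) (hG : ∀ t, G t = μ.real {ω | t < C ω})
    {y : ℝ} (hGy : ContinuousWithinAt G (Iio y) y) :
    ∫ c, (if y ≤ c then (1 : ℝ) else 0) ∂(μ.map C) = G y := by
  have hsurv : (fun t => (μ.map C).real (Ioi t)) = G := funext fun t => by
    rw [map_measureReal_apply hC measurableSet_Ioi, hG]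
    rfl
  calc ∫ c, (if y ≤ c then (1 : ℝ) else 0) ∂(μ.map C)
      = ∫ c, (Ici y).indicator 1 c ∂(μ.map C) := by simp [indicator_apply]
    _ = (μ.map C).real (Ioi y) := by
        rw [integral_indicator_one measurableSet_Ici]
        exact measureReal_Ici_eq_measureReal_Ioi (hsurv ▸ hGy)
    _ = G y := congrFun hsurv y

lemma integrable_ipcw {Y : Ω → ℝ} {ψ : ℝ → ℝ} {τ₀ M : ℝ} (hY : Measurable Y)
    (hC : Measurable C) (hψ : Measurable ψ) (hGanti : Antitone G) (hGmeas : Measurable G)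
    (hGτ₀ : 0 < G τ₀) (hψM : ∀ t, |ψ t| ≤ M) (hψ0 : ∀ t, τ₀ < t → ψ t = 0) :
    Integrable (fun ω => (if Y ω ≤ C ω then (1 : ℝ) else 0) * (ψ (Y ω) / G (Y ω))) μ :=
  Integrable.of_bound (((measurable_const.ite (measurableSet_le hY hC) measurable_const).mul
    (by fun_prop)).aestronglyMeasurable) (M / G τ₀) <|
    Eventually.of_forall fun ω => abs_ite_mul_div_le hGanti hGτ₀ (hψM _) (hψ0 _)

variable {β : Type*} [MeasurableSpace β] {W : Ω → β} {T : β → ℝ} {φ : β → ℝ} {τ₀ M : ℝ}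

theorem integral_ipcw_eq (hW : Measurable W) (hC : Measurable C) (hT : Measurable T)
    (hφ : Measurable φ) (hindep : IndepFun C W μ) (hG : ∀ t, G t = μ.real {ω | t < C ω})
    (hGcont : Continuous G) (hGτ₀ : 0 < G τ₀) (hφM : ∀ w, |φ w| ≤ M)
    (hφ0 : ∀ w, τ₀ < T w → φ w = 0) :
    ∫ ω, (if T (W ω) ≤ C ω then (1 : ℝ) else 0) * (φ (W ω) / G (T (W ω))) ∂μ =
      ∫ ω, φ (W ω) ∂μ := by
  have hGanti := antitone_of_eq_measureReal_lt hG
  have hGmeas := hGcont.measurable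
  set F : β → ℝ → ℝ := fun w c => (if T w ≤ c then (1 : ℝ) else 0) * (φ w / G (T w))
  have hF : Integrable (Function.uncurry F) ((μ.map W).prod (μ.map C)) :=
    Integrable.of_bound (((measurable_const.ite (measurableSet_le (hT.comp measurable_fst)
      measurable_snd) measurable_const).mul (by fun_prop)).aestronglyMeasurable) (M / G τ₀) <|
      Eventually.of_forall fun p => abs_ite_mul_div_le hGanti hGτ₀ (hφM _) (hφ0 _)
  have hinner : ∀ w, ∫ c, F w c ∂(μ.map C) = φ w := fun w => by
    rw [integral_mul_const, integral_ite_le_map_eq hC hG hGcont.continuousWithinAt]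
    by_cases hw : τ₀ < T w
    · simp [hφ0 w hw]
    · exact mul_div_cancel₀ _ (hGτ₀.trans_le (hGanti (not_lt.mp hw))).ne'
  calc ∫ ω, F (W ω) (C ω) ∂μ = ∫ ω, ∫ c, F (W ω) c ∂(μ.map C) ∂μ :=
        hindep.symm.integral_comp_eq_integral_integral hW hC hF
    _ = ∫ ω, φ (W ω) ∂μ := by simp_rw [hinner]

end Survival

theorem condExp_ipcw_ae_eq {Ω α : Type*} {mΩ : MeasurableSpace Ω} [MeasurableSpace α]
    {μ : Measure Ω} [IsFiniteMeasure μ] {X : Ω → α} {Y C : Ω → ℝ} {ψ G : ℝ → ℝ} {τ₀ M : ℝ}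
    (hX : Measurable X) (hY : Measurable Y) (hC : Measurable C) (hψ : Measurable ψ)
    (hindep : IndepFun C (fun ω => (X ω, Y ω)) μ) (hG : ∀ t, G t = μ.real {ω | t < C ω})
    (hGcont : Continuous G) (hGτ₀ : 0 < G τ₀) (hψM : ∀ t, |ψ t| ≤ M)
    (hψ0 : ∀ t, τ₀ < t → ψ t = 0) :
    μ[fun ω => (if Y ω ≤ C ω then (1 : ℝ) else 0) * (ψ (Y ω) / G (Y ω)) |
        MeasurableSpace.comap X inferInstance] =ᵐ[μ]
      μ[fun ω => ψ (Y ω) | MeasurableSpace.comap X inferInstance] := by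
  have hXY : Measurable fun ω => (X ω, Y ω) := hX.prodMk hY
  refine condExp_ae_eq_condExp_of_forall_setIntegral_eq hX.comap_le
    (integrable_ipcw hY hC hψ (antitone_of_eq_measureReal_lt hG) hGcont.measurable hGτ₀ hψM hψ0)
    (Integrable.of_bound (hψ.comp hY).aestronglyMeasurable M
      (Eventually.of_forall fun ω => hψM (Y ω))) ?_
  rintro _ ⟨A, hA, rfl⟩
  set φ : α × ℝ → ℝ := (Prod.fst ⁻¹' A).indicator (ψ ∘ Prod.snd)
  have hφ : Measurable φ := (hψ.comp measurable_snd).indicator (measurable_fst hA)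
  have hφM : ∀ w, |φ w| ≤ M := fun w => by
    by_cases hw : w.1 ∈ A <;> simp [φ, hw, hψM, (abs_nonneg _).trans (hψM 0)]
  have hφ0 : ∀ w : α × ℝ, τ₀ < w.2 → φ w = 0 := fun w hw => by simp [φ, indicator, hψ0 _ hw]
  calc ∫ ω in X ⁻¹' A, (if Y ω ≤ C ω then (1 : ℝ) else 0) * (ψ (Y ω) / G (Y ω)) ∂μ
      = ∫ ω, (if Y ω ≤ C ω then (1 : ℝ) else 0) * (φ (X ω, Y ω) / G (Y ω)) ∂μ := by
        rw [← integral_indicator (hX hA)]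
        congr 1 with ω
        by_cases hω : X ω ∈ A <;> simp [φ, hω]
    _ = ∫ ω, φ (X ω, Y ω) ∂μ :=
        integral_ipcw_eq (W := fun ω => (X ω, Y ω)) (T := Prod.snd) hXY hC measurable_snd hφ
          hindep hG hGcont hGτ₀ hφM hφ0
    _ = ∫ ω in X ⁻¹' A, ψ (Y ω) ∂μ := integral_indicator (hX hA)

theorem stmt8_general {Ω : Type*} [MeasureSpace Ω] [IsProbabilityMeasure (ℙ : Measure Ω)]
    {d : ℕ} (X : Ω → (Fin d → ℝ)) (Y C : Ω → ℝ) (ψ : ℝ → ℝ) (τ₀ : ℝ) (M : ℝ)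
    (hX : Measurable X) (hY : Measurable Y) (hC : Measurable C)
    (hψ : Measurable ψ) (hψbd : ∀ t, |ψ t| ≤ M) (hψ0 : ∀ t, τ₀ < t → ψ t = 0)
    (hindep : IndepFun C (fun ω => (X ω, Y ω)) ℙ)
    (G : ℝ → ℝ) (hG : ∀ t, G t = (ℙ {ω | t < C ω}).toReal)
    (hGcont : Continuous G) (hGτ₀ : 0 < G τ₀)
    (mψ : (Fin d → ℝ) → ℝ)
    (hreg : (fun ω => mψ (X ω)) =ᵐ[ℙ]
      ℙ[fun ω => ψ (Y ω) | MeasurableSpace.comap X inferInstance])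
    (madd : (Fin d → ℝ) → ℝ) (hmadd : Measurable madd)
    (hL2 : Integrable (fun ω => (madd (X ω))^2) ℙ) :
    (∫ ω, ((ℙ[(fun ω' => (if Y ω' ≤ C ω' then (1:ℝ) else 0) *
          ψ (min (Y ω') (C ω')) / G (min (Y ω') (C ω')) - madd (X ω')
          ) | MeasurableSpace.comap X inferInstance]) ω)^2 ∂ℙ
        = ∫ ω, (mψ (X ω) - madd (X ω))^2 ∂ℙ) ∧
    ((∫ ω, (mψ (X ω) - madd (X ω))^2 ∂ℙ = 0) ↔
      (fun ω => mψ (X ω)) =ᵐ[ℙ] (fun ω => madd (X ω))) := by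
  have hψY : MemLp (fun ω => ψ (Y ω)) 2 ℙ :=
    MemLp.of_bound (hψ.comp hY).aestronglyMeasurable M (Eventually.of_forall fun ω => hψbd (Y ω))
  have hmψX : MemLp (fun ω => mψ (X ω)) 2 ℙ := (hψY.condExp one_le_two).ae_eq hreg.symm
  have hmaddX : MemLp (fun ω => madd (X ω)) 2 ℙ :=
    (memLp_two_iff_integrable_sq (hmadd.comp hX).aestronglyMeasurable).mpr hL2
  have hmadd_condExp : ℙ[fun ω => madd (X ω) | MeasurableSpace.comap X inferInstance] =
      fun ω => madd (X ω) :=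
    condExp_of_stronglyMeasurable hX.comap_le
      (hmadd.comp (comap_measurable X)).stronglyMeasurable (hmaddX.integrable one_le_two)
  have hmin : (fun ω => (if Y ω ≤ C ω then (1 : ℝ) else 0) *
      ψ (min (Y ω) (C ω)) / G (min (Y ω) (C ω)) - madd (X ω)) =
      (fun ω => (if Y ω ≤ C ω then (1 : ℝ) else 0) * (ψ (Y ω) / G (Y ω))) -
        fun ω => madd (X ω) := by
    funext ω
    by_cases h : Y ω ≤ C ω <;> simp [h]
  have hcondExp : ℙ[(fun ω => (if Y ω ≤ C ω then (1 : ℝ) else 0) *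
      ψ (min (Y ω) (C ω)) / G (min (Y ω) (C ω)) - madd (X ω)) |
        MeasurableSpace.comap X inferInstance] =ᵐ[ℙ] fun ω => mψ (X ω) - madd (X ω) := by
    rw [hmin]
    filter_upwards [condExp_sub (integrable_ipcw hY hC hψ (antitone_of_eq_measureReal_lt hG)
        hGcont.measurable hGτ₀ hψbd hψ0) (hmaddX.integrable one_le_two) _,
      condExp_ipcw_ae_eq hX hY hC hψ hindep hG hGcont hGτ₀ hψbd hψ0, hreg] with ω h1 h2 h3
    rw [h1, Pi.sub_apply, h2, hmadd_condExp, h3]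
  exact ⟨integral_congr_ae (hcondExp.fun_comp (· ^ 2)), integral_sq_sub_eq_zero_iff hmψX hmaddX⟩

/-- The targeted functional characterizes additivity:
`E[(E[δψ(Z)/G(Z) − m_add(X) | X])²] = E[(m_ψ(X) − m_add(X))²]`, and this
quantity vanishes iff `m_ψ(X) = m_add(X)` a.s. -/
theorem stmt8 {Ω : Type*} [MeasureSpace Ω] [IsProbabilityMeasure (ℙ : Measure Ω)]
    {d : ℕ} (X : Ω → (Fin d → ℝ)) (Y C : Ω → ℝ) (ψ : ℝ → ℝ) (τ₀ : ℝ) (M : ℝ)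
    (hX : Measurable X) (hY : Measurable Y) (hC : Measurable C)
    (hψ : Measurable ψ) (hψbd : ∀ t, |ψ t| ≤ M) (hψ0 : ∀ t, τ₀ < t → ψ t = 0)
    (hindep : IndepFun C (fun ω => (X ω, Y ω)) ℙ)
    (G : ℝ → ℝ) (hG : ∀ t, G t = (ℙ {ω | t < C ω}).toReal)
    (hGcont : Continuous G) (hGτ₀ : 0 < G τ₀)
    (mψ : (Fin d → ℝ) → ℝ) (hmψ : Measurable mψ)
    (hreg : (fun ω => mψ (X ω)) =ᵐ[ℙ]
      ℙ[fun ω => ψ (Y ω) | MeasurableSpace.comap X inferInstance])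
    (madd : (Fin d → ℝ) → ℝ) (hmadd : Measurable madd)
    (hL2 : Integrable (fun ω => (madd (X ω))^2) ℙ) :
    (∫ ω, ((ℙ[(fun ω' => (if Y ω' ≤ C ω' then (1:ℝ) else 0) *
          ψ (min (Y ω') (C ω')) / G (min (Y ω') (C ω')) - madd (X ω')
          ) | MeasurableSpace.comap X inferInstance]) ω)^2 ∂ℙ
        = ∫ ω, (mψ (X ω) - madd (X ω))^2 ∂ℙ) ∧
    ((∫ ω, (mψ (X ω) - madd (X ω))^2 ∂ℙ = 0) ↔
      (fun ω => mψ (X ω)) =ᵐ[ℙ] (fun ω => madd (X ω))) :=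
  stmt8_general X Y C ψ τ₀ M hX hY hC hψ hψbd hψ0 hindep G hG hGcont hGτ₀ mψ hreg madd hmadd hL2
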